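/- arXiv:math/0702358 — 2 statements merged into one kernel-verified Lean document; each statement's English description precedes it below -/
import Mathlib

section
/- (Law of Large Numbers under sublinear expectation) Let X_1, X_2, ... be a sequence in H_2 with E[X_i^2] = σ̄² for all i and E[X_i X_{i+j}] = E[-X_i X_{i+j}] = 0 for all i, j ≥ 1, where σ̄ ∈ (0,∞). Set S_n = X_1 + ⋯ + X_n. Then E[|S_n/n|²] ≤ σ̄²/n for all n ≥ 1, and hence E[|S_n/n|²] → 0 as n → ∞. -/
/-!
Expand `S (n+1)² = S n² + X (n+1)² + 2 ∑_{i ≤ n} X i X (n+1)`. Each cross product has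
upper and lower mean `0`, and a variable `Y` with `E (-Y) = -E Y` is invisible to sublinearity:
`E (Z + Y) = E Z + E Y`, by subadditivity applied to `Z + Y` and to `(Z + Y) + (-Y)`. Such
variables are closed under sums and nonnegative multiples, so the whole cross term drops out and
subadditivity gives `E (S n²) ≤ n σ²` by induction. Positive homogeneity turns this into
`E |S n / n|² ≤ σ² / n`, which tends to `0`; the lower bound `0` comes from monotonicity.
-/

open Filter Finset

variable {Ω : Type*}

/-- Peng's "no mean-uncertainty": the upper mean `E Y` and the lower mean `-E (-Y)` agree. -/
def HasNoMeanUncertainty (E : (Ω → ℝ) → ℝ) (Y : Ω → ℝ) : Prop :=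
  E (-Y) = -E Y

namespace SublinearExpectation

variable {E : (Ω → ℝ) → ℝ}

theorem map_zero (poshom : ∀ (l : ℝ) (X : Ω → ℝ), 0 ≤ l → E (l • X) = l * E X) :
    E 0 = 0 := by
  simpa using poshom 0 0 le_rfl

theorem map_nonneg (mono : ∀ X Y : Ω → ℝ, (∀ ω, X ω ≤ Y ω) → E X ≤ E Y)
    (h0 : E 0 = 0) {Y : Ω → ℝ} (hY : ∀ ω, 0 ≤ Y ω) : 0 ≤ E Y :=
  h0 ▸ mono 0 Y hY

theorem map_add_of_hasNoMeanUncertainty (subadd : ∀ X Y : Ω → ℝ, E (X + Y) ≤ E X + E Y)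
    (X : Ω → ℝ) {Y : Ω → ℝ} (hY : HasNoMeanUncertainty E Y) : E (X + Y) = E X + E Y := by
  have hle := subadd X Y
  have hge := subadd (X + Y) (-Y)
  rw [add_neg_cancel_right, hY] at hge
  linarith

theorem map_sq_div (poshom : ∀ (l : ℝ) (X : Ω → ℝ), 0 ≤ l → E (l • X) = l * E X)
    (Y : Ω → ℝ) (c : ℝ) : E (fun ω => |Y ω / c| ^ 2) = E (fun ω => Y ω ^ 2) / c ^ 2 := by
  have hscale : (fun ω => |Y ω / c| ^ 2) = (c ^ 2)⁻¹ • fun ω => Y ω ^ 2 := by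
    funext ω
    simp only [Pi.smul_apply, smul_eq_mul, sq_abs, div_pow]
    ring
  rw [hscale, poshom _ _ (by positivity), inv_mul_eq_div]

end SublinearExpectation

namespace HasNoMeanUncertainty

open SublinearExpectation

variable {E : (Ω → ℝ) → ℝ} {Y Z : Ω → ℝ}

theorem of_map_eq_zero (hY : E Y = 0) (hY' : E (-Y) = 0) : HasNoMeanUncertainty E Y := by
  rw [HasNoMeanUncertainty, hY, hY', neg_zero]

theorem neg (hY : HasNoMeanUncertainty E Y) : HasNoMeanUncertainty E (-Y) := by
  rw [HasNoMeanUncertainty, neg_neg, hY, neg_neg]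

theorem add (subadd : ∀ X Y : Ω → ℝ, E (X + Y) ≤ E X + E Y)
    (hY : HasNoMeanUncertainty E Y) (hZ : HasNoMeanUncertainty E Z) :
    HasNoMeanUncertainty E (Y + Z) := by
  rw [HasNoMeanUncertainty, neg_add, map_add_of_hasNoMeanUncertainty subadd _ hZ.neg,
    map_add_of_hasNoMeanUncertainty subadd _ hZ, hY, hZ, neg_add]

theorem smul (poshom : ∀ (l : ℝ) (X : Ω → ℝ), 0 ≤ l → E (l • X) = l * E X)
    (hY : HasNoMeanUncertainty E Y) {c : ℝ} (hc : 0 ≤ c) :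
    HasNoMeanUncertainty E (c • Y) := by
  rw [HasNoMeanUncertainty, ← smul_neg, poshom c _ hc, poshom c _ hc, hY, mul_neg]

theorem sum {ι : Type*} (subadd : ∀ X Y : Ω → ℝ, E (X + Y) ≤ E X + E Y) (h0 : E 0 = 0)
    {Y : ι → Ω → ℝ} {s : Finset ι} (hY : ∀ i ∈ s, HasNoMeanUncertainty E (Y i)) :
    HasNoMeanUncertainty E (∑ i ∈ s, Y i) ∧ E (∑ i ∈ s, Y i) = ∑ i ∈ s, E (Y i) := by
  classical
  induction s using Finset.induction with
  | empty =>
    exact ⟨of_map_eq_zero (by simpa using h0) (by simpa using h0), by simpa using h0⟩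
  | insert a t hat ih =>
    obtain ⟨ht, hsum⟩ := ih fun i hi => hY i (mem_insert_of_mem hi)
    have ha := hY a (mem_insert_self a t)
    rw [sum_insert hat, sum_insert hat, map_add_of_hasNoMeanUncertainty subadd _ ht, hsum]
    exact ⟨ha.add subadd ht, rfl⟩

end HasNoMeanUncertainty

namespace SublinearExpectation

theorem map_sq_sum_le {E : (Ω → ℝ) → ℝ} {ι : Type*}
    (subadd : ∀ X Y : Ω → ℝ, E (X + Y) ≤ E X + E Y)
    (poshom : ∀ (l : ℝ) (X : Ω → ℝ), 0 ≤ l → E (l • X) = l * E X)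
    (X : ι → Ω → ℝ) (s : Finset ι) (v : ℝ)
    (hvar : ∀ i ∈ s, E (fun ω => X i ω ^ 2) ≤ v)
    (huncorr : ∀ i ∈ s, ∀ j ∈ s, i ≠ j →
      E (fun ω => X i ω * X j ω) = 0 ∧ E (fun ω => -(X i ω * X j ω)) = 0) :
    E (fun ω => (∑ i ∈ s, X i ω) ^ 2) ≤ #s * v := by
  classical
  induction s using Finset.induction with
  | empty => simp [← Pi.zero_def, map_zero poshom]
  | insert a t hat ih =>
    set C : Ω → ℝ := ∑ i ∈ t, fun ω => X a ω * X i ω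
    have hC : HasNoMeanUncertainty E C ∧ E C = 0 := by
      have hnull : ∀ i ∈ t, HasNoMeanUncertainty E (fun ω => X a ω * X i ω) ∧
          E (fun ω => X a ω * X i ω) = 0 := fun i hi =>
        have h := huncorr a (mem_insert_self a t) i (mem_insert_of_mem hi)
          (ne_of_mem_of_not_mem hi hat).symm
        ⟨.of_map_eq_zero h.1 h.2, h.1⟩
      obtain ⟨hnmu, hsum⟩ :=
        HasNoMeanUncertainty.sum subadd (map_zero poshom) fun i hi => (hnull i hi).1
      exact ⟨hnmu, hsum.trans (sum_eq_zero fun i hi => (hnull i hi).2)⟩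
    have hexpand : (fun ω => (∑ i ∈ insert a t, X i ω) ^ 2) =
        ((fun ω => X a ω ^ 2) + fun ω => (∑ i ∈ t, X i ω) ^ 2) + (2 : ℝ) • C := by
      funext ω
      simp only [sum_insert hat, Pi.add_apply, Pi.smul_apply, smul_eq_mul, C, Finset.sum_apply]
      rw [← mul_sum]
      ring
    rw [hexpand, map_add_of_hasNoMeanUncertainty subadd _ (hC.1.smul poshom zero_le_two),
      poshom 2 C zero_le_two, hC.2, mul_zero, add_zero, card_insert_of_notMem hat]
    calc _ ≤ E (fun ω => X a ω ^ 2) + E (fun ω => (∑ i ∈ t, X i ω) ^ 2) := subadd _ _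
      _ ≤ v + #t * v := add_le_add (hvar a (mem_insert_self a t))
          (ih (fun i hi => hvar i (mem_insert_of_mem hi))
            fun i hi j hj => huncorr i (mem_insert_of_mem hi) j (mem_insert_of_mem hj))
      _ = ((#t + 1 : ℕ) : ℝ) * v := by push_cast; ring

end SublinearExpectation

open SublinearExpectation in
theorem sublinear_LLN_general (E : (Ω → ℝ) → ℝ)
    (mono : ∀ X Y : Ω → ℝ, (∀ ω, X ω ≤ Y ω) → E X ≤ E Y)
    (subadd : ∀ X Y : Ω → ℝ, E (X + Y) ≤ E X + E Y)
    (poshom : ∀ (l : ℝ) (X : Ω → ℝ), 0 ≤ l → E (l • X) = l * E X)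
    (X : ℕ → Ω → ℝ) (σ : ℝ)
    (hvar : ∀ i : ℕ, 1 ≤ i → E (fun ω => (X i ω) ^ 2) = σ ^ 2)
    (huncorr : ∀ i j : ℕ, 1 ≤ i → 1 ≤ j →
      E (fun ω => X i ω * X (i + j) ω) = 0 ∧ E (fun ω => -(X i ω * X (i + j) ω)) = 0)
    (S : ℕ → Ω → ℝ) (hS : ∀ n, S n = fun ω => ∑ i ∈ Finset.Icc 1 n, X i ω) :
    (∀ n : ℕ, 1 ≤ n → E (fun ω => |S n ω / n| ^ 2) ≤ σ ^ 2 / n) ∧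
      Tendsto (fun n : ℕ => E (fun ω => |S n ω / n| ^ 2)) atTop (nhds 0) := by
  have hpair : ∀ i ≥ 1, ∀ j ≥ 1, i ≠ j →
      E (fun ω => X i ω * X j ω) = 0 ∧ E (fun ω => -(X i ω * X j ω)) = 0 := by
    intro i hi j hj hij
    rcases hij.lt_or_gt with hlt | hgt
    · simpa only [Nat.add_sub_cancel' hlt.le] using huncorr i (j - i) hi (by omega)
    · simpa only [Nat.add_sub_cancel' hgt.le, mul_comm (X j _)] using
        huncorr j (i - j) hj (by omega)
  have hsq (n : ℕ) : E (fun ω => S n ω ^ 2) ≤ n * σ ^ 2 := by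
    simpa [hS] using map_sq_sum_le subadd poshom X (Icc 1 n) (σ ^ 2)
      (fun i hi => (hvar i (mem_Icc.1 hi).1).le)
      fun i hi j hj => hpair i (mem_Icc.1 hi).1 j (mem_Icc.1 hj).1
  have hbound (n : ℕ) (hn : 1 ≤ n) : E (fun ω => |S n ω / n| ^ 2) ≤ σ ^ 2 / n := by
    have hn' : (0 : ℝ) < n := by exact_mod_cast hn
    calc E (fun ω => |S n ω / n| ^ 2) = E (fun ω => S n ω ^ 2) / (n : ℝ) ^ 2 :=
          map_sq_div poshom _ _
      _ ≤ n * σ ^ 2 / (n : ℝ) ^ 2 := by gcongr; exact hsq n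
      _ = σ ^ 2 / n := by field_simp
  refine ⟨hbound, squeeze_zero' (Eventually.of_forall fun n => ?_)
    (eventually_atTop.2 ⟨1, hbound⟩) (tendsto_const_div_atTop_nhds_zero_nat _)⟩
  exact map_nonneg mono (map_zero poshom) fun ω => by positivity

/-- Law of Large Numbers under a sublinear expectation. The sequence is indexed so that
`X 1, X 2, ...` are the random variables and `S n = X 1 + ⋯ + X n`. -/
theorem sublinear_LLN (E : (Ω → ℝ) → ℝ)
    (mono : ∀ X Y : Ω → ℝ, (∀ ω, X ω ≤ Y ω) → E X ≤ E Y)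
    (subadd : ∀ X Y : Ω → ℝ, E (X + Y) ≤ E X + E Y)
    (poshom : ∀ (l : ℝ) (X : Ω → ℝ), 0 ≤ l → E (l • X) = l * E X)
    (transl : ∀ (X : Ω → ℝ) (c : ℝ), E (X + fun _ => c) = E X + c)
    (X : ℕ → Ω → ℝ) (σ : ℝ) (hσ : 0 < σ)
    (hvar : ∀ i : ℕ, 1 ≤ i → E (fun ω => (X i ω) ^ 2) = σ ^ 2)
    (huncorr : ∀ i j : ℕ, 1 ≤ i → 1 ≤ j →
      E (fun ω => X i ω * X (i + j) ω) = 0 ∧ E (fun ω => -(X i ω * X (i + j) ω)) = 0)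
    (S : ℕ → Ω → ℝ) (hS : ∀ n, S n = fun ω => ∑ i ∈ Finset.Icc 1 n, X i ω) :
    (∀ n : ℕ, 1 ≤ n → E (fun ω => |S n ω / n| ^ 2) ≤ σ ^ 2 / n) ∧
      Tendsto (fun n : ℕ => E (fun ω => |S n ω / n| ^ 2)) atTop (nhds 0) :=
  sublinear_LLN_general E mono subadd poshom X σ hvar huncorr S hS
end

section
/- (LLN with mean μ) Let X_1, X_2, ... be random variables in H_2 with E[(X_i - μ)²] = σ̄² and E[(X_i-μ)(X_{i+j}-μ)] = E[-(X_i-μ)(X_{i+j}-μ)] = 0 for all i, j ≥ 1. Then with S_n = X_1 + ⋯ + X_n, we have E[|S_n/n - μ|²] ≤ σ̄²/n, hence lim_{n→∞} E[|S_n/n − μ|²] = 0. -/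
/-!
Writing `Yᵢ = Xᵢ - μ`, we have `|Sₙ/n - μ|² = n⁻² (∑ Yᵢ)² = n⁻² ∑ᵢ ∑ⱼ Yᵢ Yⱼ`. Subadditivity bounds
the sublinear expectation of the double sum by the sum of the expectations of its terms; the
off-diagonal ones vanish by uncorrelatedness and the `n` diagonal ones equal `σ²`, so positive
homogeneity gives the bound `σ²/n`. Monotonicity makes the expectations nonnegative, and the
limit follows by squeezing.
-/

open Filter

variable {Ω : Type*}

section SublinearExpectation

variable (E : (Ω → ℝ) → ℝ)

theorem map_zero_of_poshom (poshom : ∀ (l : ℝ) (X : Ω → ℝ), 0 ≤ l → E (l • X) = l * E X) :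
    E 0 = 0 := by
  simpa using poshom 0 0 le_rfl

theorem nonneg_of_mono (mono : ∀ X Y : Ω → ℝ, (∀ ω, X ω ≤ Y ω) → E X ≤ E Y) (h0 : E 0 = 0)
    {X : Ω → ℝ} (hX : ∀ ω, 0 ≤ X ω) : 0 ≤ E X :=
  h0 ▸ mono 0 X hX

theorem sq_sum_le_sum_sq_of_cross_nonpos
    (subadd : ∀ X Y : Ω → ℝ, E (X + Y) ≤ E X + E Y) (h0 : E 0 = 0)
    {ι : Type*} [DecidableEq ι] (s : Finset ι) (f : ι → Ω → ℝ)
    (hcross : ∀ i ∈ s, ∀ j ∈ s, i ≠ j → E (f i * f j) ≤ 0) :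
    E ((∑ i ∈ s, f i) ^ 2) ≤ ∑ i ∈ s, E (f i ^ 2) := by
  have hsum (g : ι → Ω → ℝ) : E (∑ i ∈ s, g i) ≤ ∑ i ∈ s, E (g i) :=
    Finset.le_sum_of_subadditive E h0.le subadd s g
  calc E ((∑ i ∈ s, f i) ^ 2) = E (∑ i ∈ s, ∑ j ∈ s, f i * f j) := by
        rw [sq, Finset.sum_mul_sum]
    _ ≤ ∑ i ∈ s, ∑ j ∈ s, E (f i * f j) :=
        (hsum _).trans (Finset.sum_le_sum fun i _ => hsum _)
    _ ≤ ∑ i ∈ s, E (f i ^ 2) := by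
        refine Finset.sum_le_sum fun i hi => ?_
        rw [← Finset.add_sum_erase s _ hi, sq]
        have : ∑ j ∈ s.erase i, E (f i * f j) ≤ 0 :=
          Finset.sum_nonpos fun j hj =>
            hcross i hi j (Finset.mem_of_mem_erase hj) (Finset.ne_of_mem_erase hj).symm
        linarith

theorem mean_sq_avg_le_of_cross_nonpos
    (subadd : ∀ X Y : Ω → ℝ, E (X + Y) ≤ E X + E Y)
    (poshom : ∀ (l : ℝ) (X : Ω → ℝ), 0 ≤ l → E (l • X) = l * E X)
    {ι : Type*} [DecidableEq ι] (s : Finset ι) (hs : s.Nonempty) (f : ι → Ω → ℝ)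
    (hcross : ∀ i ∈ s, ∀ j ∈ s, i ≠ j → E (f i * f j) ≤ 0) {v : ℝ}
    (hvar : ∀ i ∈ s, E (f i ^ 2) ≤ v) :
    E (((1 : ℝ) / s.card) ^ 2 • (∑ i ∈ s, f i) ^ 2) ≤ v / s.card := by
  have hcard : (0 : ℝ) < s.card := by exact_mod_cast hs.card_pos
  have hsum : E ((∑ i ∈ s, f i) ^ 2) ≤ s.card * v :=
    calc E ((∑ i ∈ s, f i) ^ 2) ≤ ∑ i ∈ s, E (f i ^ 2) :=
          sq_sum_le_sum_sq_of_cross_nonpos E subadd (map_zero_of_poshom E poshom) s f hcross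
      _ ≤ ∑ _i ∈ s, v := Finset.sum_le_sum hvar
      _ = s.card * v := by simp
  calc E (((1 : ℝ) / s.card) ^ 2 • (∑ i ∈ s, f i) ^ 2)
      ≤ ((1 : ℝ) / s.card) ^ 2 * (s.card * v) := by
        rw [poshom _ _ (by positivity)]
        gcongr
    _ = v / s.card := by field_simp

theorem mul_eq_zero_of_ne_of_forall_mul_add_eq_zero (g : ℕ → Ω → ℝ)
    (h : ∀ i j : ℕ, 1 ≤ i → 1 ≤ j → E (g i * g (i + j)) = 0)
    {i j : ℕ} (hi : 1 ≤ i) (hj : 1 ≤ j) (hij : i ≠ j) : E (g i * g j) = 0 := by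
  rcases hij.lt_or_gt with hlt | hlt
  · obtain ⟨k, rfl⟩ := Nat.exists_eq_add_of_lt hlt
    exact h i (k + 1) hi (by omega)
  · obtain ⟨k, rfl⟩ := Nat.exists_eq_add_of_lt hlt
    rw [mul_comm]
    exact h j (k + 1) hj (by omega)

end SublinearExpectation

theorem sq_abs_sum_div_card_sub_eq {ι : Type*} (s : Finset ι) (hs : s.Nonempty) (x : ι → ℝ)
    (μ : ℝ) :
    |(∑ i ∈ s, x i) / s.card - μ| ^ 2 = ((1 : ℝ) / s.card) ^ 2 * (∑ i ∈ s, (x i - μ)) ^ 2 := by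
  have hcard : (s.card : ℝ) ≠ 0 := by exact_mod_cast hs.card_pos.ne'
  rw [sq_abs, Finset.sum_sub_distrib, Finset.sum_const, nsmul_eq_mul]
  field_simp

theorem sublinear_LLN_mean_general (E : (Ω → ℝ) → ℝ)
    (mono : ∀ X Y : Ω → ℝ, (∀ ω, X ω ≤ Y ω) → E X ≤ E Y)
    (subadd : ∀ X Y : Ω → ℝ, E (X + Y) ≤ E X + E Y)
    (poshom : ∀ (l : ℝ) (X : Ω → ℝ), 0 ≤ l → E (l • X) = l * E X)
    (X : ℕ → Ω → ℝ) (μ σ : ℝ)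
    (hvar : ∀ i : ℕ, 1 ≤ i → E (fun ω => (X i ω - μ) ^ 2) = σ ^ 2)
    (huncorr : ∀ i j : ℕ, 1 ≤ i → 1 ≤ j →
      E (fun ω => (X i ω - μ) * (X (i + j) ω - μ)) = 0 ∧
      E (fun ω => -((X i ω - μ) * (X (i + j) ω - μ))) = 0)
    (S : ℕ → Ω → ℝ) (hS : ∀ n, S n = fun ω => ∑ i ∈ Finset.Icc 1 n, X i ω) :
    (∀ n : ℕ, 1 ≤ n → E (fun ω => |S n ω / n - μ| ^ 2) ≤ σ ^ 2 / n) ∧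
      Tendsto (fun n : ℕ => E (fun ω => |S n ω / n - μ| ^ 2)) atTop (nhds 0) := by
  set Y : ℕ → Ω → ℝ := fun i ω => X i ω - μ
  have hbound (n : ℕ) (hn : 1 ≤ n) : E (fun ω => |S n ω / n - μ| ^ 2) ≤ σ ^ 2 / n := by
    have hcard : ((Finset.Icc 1 n).card : ℝ) = n := by simp
    have hsq : (fun ω => |S n ω / n - μ| ^ 2)
        = ((1 : ℝ) / (Finset.Icc 1 n).card) ^ 2 • (∑ i ∈ Finset.Icc 1 n, Y i) ^ 2 := by
      funext ω
      simp only [hS, ← hcard, sq_abs_sum_div_card_sub_eq _ (Finset.nonempty_Icc.2 hn),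
        Pi.smul_apply, Pi.pow_apply, Finset.sum_apply, smul_eq_mul, Y]
    rw [hsq, ← hcard]
    refine mean_sq_avg_le_of_cross_nonpos E subadd poshom _ (Finset.nonempty_Icc.2 hn) Y
      (fun i hi j hj hij => ?_) fun i hi => (hvar i (Finset.mem_Icc.1 hi).1).le
    exact (mul_eq_zero_of_ne_of_forall_mul_add_eq_zero E Y (fun i j hi hj => (huncorr i j hi hj).1)
      (Finset.mem_Icc.1 hi).1 (Finset.mem_Icc.1 hj).1 hij).le
  refine ⟨hbound, squeeze_zero' (Eventually.of_forall fun n => nonneg_of_mono E mono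
    (map_zero_of_poshom E poshom) fun ω => by positivity) (eventually_atTop.2 ⟨1, hbound⟩)
    (tendsto_const_div_atTop_nhds_zero_nat _)⟩

/-- Law of Large Numbers with mean `μ` under a sublinear expectation. -/
theorem sublinear_LLN_mean (E : (Ω → ℝ) → ℝ)
    (mono : ∀ X Y : Ω → ℝ, (∀ ω, X ω ≤ Y ω) → E X ≤ E Y)
    (subadd : ∀ X Y : Ω → ℝ, E (X + Y) ≤ E X + E Y)
    (poshom : ∀ (l : ℝ) (X : Ω → ℝ), 0 ≤ l → E (l • X) = l * E X)
    (transl : ∀ (X : Ω → ℝ) (c : ℝ), E (X + fun _ => c) = E X + c)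
    (X : ℕ → Ω → ℝ) (μ σ : ℝ) (hσ : 0 < σ)
    (hvar : ∀ i : ℕ, 1 ≤ i → E (fun ω => (X i ω - μ) ^ 2) = σ ^ 2)
    (huncorr : ∀ i j : ℕ, 1 ≤ i → 1 ≤ j →
      E (fun ω => (X i ω - μ) * (X (i + j) ω - μ)) = 0 ∧
      E (fun ω => -((X i ω - μ) * (X (i + j) ω - μ))) = 0)
    (S : ℕ → Ω → ℝ) (hS : ∀ n, S n = fun ω => ∑ i ∈ Finset.Icc 1 n, X i ω) :
    (∀ n : ℕ, 1 ≤ n → E (fun ω => |S n ω / n - μ| ^ 2) ≤ σ ^ 2 / n) ∧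
      Tendsto (fun n : ℕ => E (fun ω => |S n ω / n - μ| ^ 2)) atTop (nhds 0) :=
  sublinear_LLN_mean_general E mono subadd poshom X μ σ hvar huncorr S hS
end
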